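/- arXiv:1912.06301 — 5 statements merged into one kernel-verified Lean document; each statement's English description precedes it below -/
import Mathlib

section
/- For a positive integer N, the derivative of the falling factorial polynomial x(x-1)...(x-N+1) equals the sum over t from 1 to N of ((-1)^(t+1)/t) * N(N-1)...(N-t+1) * x(x-1)...(x-(N-t)+1). -/
/-!
Induction on `N`. By the product rule the derivative of `x^{\underline{N+1}} = x^{\underline N} (x - N)`
is `(x^{\underline N})' (x - N) + x^{\underline N}`, so it suffices that the right-hand side obeys the
same recurrence. Pascal's rule `(N+1)^{\underline{t}} = N^{\underline t} + t N^{\underline{t-1}}` splits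
each of its terms in two, and after shifting the index of the second half the sums recombine
into the `N`-th sum times `x - N`, up to the boundary term `x^{\underline N}`.
-/

/-- Falling factorial `x(x-1)⋯(x-n+1)`. -/
noncomputable def ff (x : ℝ) (n : ℕ) : ℝ := ∏ i ∈ Finset.range n, (x - i)

open Finset

lemma ff_zero (x : ℝ) : ff x 0 = 1 := prod_range_zero _

lemma ff_succ (x : ℝ) (n : ℕ) : ff x (n + 1) = ff x n * (x - n) := prod_range_succ _ _

lemma ff_add_one_succ (x : ℝ) (n : ℕ) : ff (x + 1) (n + 1) = (x + 1) * ff x n := by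
  simp only [ff, prod_range_succ', Nat.cast_succ, Nat.cast_zero, sub_zero, add_sub_add_right_eq_sub,
    mul_comm]

lemma ff_natCast_add_one_succ (N n : ℕ) :
    ff ((N + 1 : ℕ) : ℝ) (n + 1) = ff N (n + 1) + (n + 1) * ff N n := by
  rw [Nat.cast_succ, ff_add_one_succ, ff_succ]
  ring

lemma ff_natCast_self_succ (N : ℕ) : ff N (N + 1) = 0 :=
  prod_eq_zero (self_mem_range_succ N) (sub_self _)

lemma sum_range_add_one_eq_sum_Icc {M : Type*} [AddCommMonoid M] (f : ℕ → M) (n : ℕ) :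
    ∑ i ∈ range n, f (i + 1) = ∑ t ∈ Icc 1 n, f t := by
  rw [range_eq_Ico, sum_Ico_add', zero_add, Ico_add_one_right_eq_Icc]

noncomputable def ffDerivSum (N : ℕ) (x : ℝ) : ℝ :=
  ∑ t ∈ Icc 1 N, ((-1 : ℝ) ^ (t + 1) / t) * ff N t * ff x (N - t)

lemma ffDerivSum_eq_sum_range (N : ℕ) (x : ℝ) :
    ffDerivSum N x = ∑ i ∈ range N, (-1 : ℝ) ^ i / (i + 1) * ff N (i + 1) * ff x (N - (i + 1)) := by
  rw [ffDerivSum, ← sum_range_add_one_eq_sum_Icc]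
  simp [pow_succ]

lemma ffDerivSum_succ (N : ℕ) (x : ℝ) :
    ffDerivSum (N + 1) x = ffDerivSum N x * (x - N) + ff x N := by
  set a : ℕ → ℝ := fun i ↦ (-1) ^ i / (i + 1) * ff N (i + 1) * ff x (N - i)
  set b : ℕ → ℝ := fun i ↦ (-1) ^ i * ff N i * ff x (N - i)
  have pascal (i : ℕ) :
      (-1) ^ i / (i + 1) * ff ((N + 1 : ℕ) : ℝ) (i + 1) * ff x (N + 1 - (i + 1)) = a i + b i := by
    rw [ff_natCast_add_one_succ, Nat.add_sub_add_right]
    simp only [a, b]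
    field_simp
  have telescope (i : ℕ) (hi : i ∈ range N) :
      a i + b (i + 1) = (-1) ^ i / (i + 1) * ff N (i + 1) * ff x (N - (i + 1)) * (x - N) := by
    obtain ⟨m, rfl⟩ : ∃ m, N = m + i + 1 := ⟨N - (i + 1), by grind⟩
    simp only [a, b, show m + i + 1 - i = m + 1 by omega, show m + i + 1 - (i + 1) = m by omega,
      ff_succ, pow_succ]
    push_cast
    field_simp
    ring
  have a_last : a N = 0 := by simp [a, ff_natCast_self_succ]
  have b_first : b 0 = ff x N := by simp [b, ff_zero]
  rw [ffDerivSum_eq_sum_range, ffDerivSum_eq_sum_range, sum_congr rfl fun i _ ↦ pascal i,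
    sum_add_distrib, sum_range_succ, a_last, sum_range_succ', b_first, sum_mul,
    ← sum_congr rfl telescope, sum_add_distrib]
  ring

lemma hasDerivAt_ff (N : ℕ) (x : ℝ) : HasDerivAt (fun y ↦ ff y N) (ffDerivSum N x) x := by
  induction N with
  | zero => simpa [ff_zero, ffDerivSum] using hasDerivAt_const x (1 : ℝ)
  | succ N ih =>
    simp only [ff_succ, ffDerivSum_succ]
    simpa using ih.fun_mul ((hasDerivAt_id x).sub_const (N : ℝ))

theorem stmt0_general (N : ℕ) (x : ℝ) :
    deriv (fun y : ℝ => ff y N) x =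
      ∑ t ∈ Finset.Icc 1 N, ((-1 : ℝ) ^ (t + 1) / t) * ff (N : ℝ) t * ff x (N - t) :=
  (hasDerivAt_ff N x).deriv

theorem stmt0 (N : ℕ) (hN : 0 < N) (x : ℝ) :
    deriv (fun y : ℝ => ff y N) x =
      ∑ t ∈ Finset.Icc 1 N, ((-1 : ℝ) ^ (t + 1) / t) * ff (N : ℝ) t * ff x (N - t) :=
  stmt0_general N x
end

section
/- Let λ be a k-singular partition. Then the coefficient r_λ := -H_λ(k)/H'_{λ†}(k) satisfies the closed-form r_λ = (-1)^{k+λ1+λ2} (λ1-λ2)^{\underline{k+1}} / ((2k+2-λ1+λ2)! (λ1-λ2-k-2)!). -/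
/-- `H_λ(κ) = (λ₁-λ₂)! λ₂! (λ₁-1-κ)^{underline{λ₂}}`. -/
noncomputable def Hpol (l1 l2 : ℕ) (κ : ℝ) : ℝ :=
  ((l1 - l2).factorial : ℝ) * (l2.factorial : ℝ) * ff ((l1 : ℝ) - 1 - κ) l2

/-!
Write `λ₁ - λ₂ = k + 2 + e`. At `κ = k` the falling factorial in `H_{λ†}` is evaluated at the
natural number `λ₂`, one of its roots, so its derivative there is the product of the other
factors, `λ₂! (-1)^e e!`. Every other quantity is a falling factorial at a natural number, i.e.
a quotient of factorials, and the identity comes down to cancelling the common factor `(e+1)!`.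
-/

open Finset Nat

lemma ff_eq_eval_descPochhammer (x : ℝ) (n : ℕ) : ff x n = (descPochhammer ℝ n).eval x :=
  (descPochhammer_eval_eq_prod_range n x).symm

lemma ff_natCast (a n : ℕ) : ff a n = a.descFactorial n := by
  rw [ff_eq_eval_descPochhammer, descPochhammer_eval_eq_descFactorial]

lemma differentiable_ff (n : ℕ) : Differentiable ℝ fun x => ff x n := by
  simpa only [ff_eq_eval_descPochhammer] using (descPochhammer ℝ n).differentiable

lemma ff_one (x : ℝ) : ff x 1 = x := by
  simp [ff]

lemma ff_add (x : ℝ) (m n : ℕ) : ff x (m + n) = ff x m * ff (x - m) n := by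
  simp only [ff, prod_range_add]
  congr 1
  refine prod_congr rfl fun i _ => ?_
  push_cast
  ring

lemma ff_neg_one (n : ℕ) : ff (-1) n = (-1) ^ n * n ! := by
  have h : ∀ i ∈ range n, (-1 : ℝ) - i = -1 * ((i : ℝ) + 1) := fun i _ => by ring
  rw [ff, prod_congr rfl h, prod_mul_distrib, prod_const, card_range,
    ← prod_range_add_one_eq_factorial]
  push_cast
  rfl

lemma hasDerivAt_ff_add_one_add (m j : ℕ) :
    HasDerivAt (fun x => ff x (m + 1 + j)) ((-1) ^ j * m ! * j !) m := by
  set G : ℝ → ℝ := fun x => ff x m * ff (x - m - 1) j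
  have hsplit : (fun x => ff x (m + 1 + j)) = fun x => (x - m) * G x := by
    funext x
    rw [ff_add, ff_add, ff_one, Nat.cast_add_one, ← sub_sub]
    ring
  have hG : G m = m ! * ((-1) ^ j * j !) := by
    simp only [G, ff_natCast, descFactorial_self, sub_self, zero_sub, ff_neg_one]
  have hGd : DifferentiableAt ℝ G m :=
    ((differentiable_ff m).mul ((differentiable_ff j).comp
      ((differentiable_id.sub_const _).sub_const _))) m
  rw [hsplit]
  refine (((hasDerivAt_id (m : ℝ)).sub_const (m : ℝ)).mul hGd.hasDerivAt).congr_deriv ?_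
  rw [id, sub_self, zero_mul, add_zero, one_mul, hG]
  ring

lemma hasDerivAt_Hpol_of_eq_natCast {p m j : ℕ} {κ : ℝ} (hκ : (p : ℝ) - 1 - κ = m) :
    HasDerivAt (Hpol p (m + 1 + j))
      (-((p - (m + 1 + j))! * (m + 1 + j)! * ((-1) ^ j * m ! * j !))) κ := by
  have hinner : HasDerivAt (fun κ : ℝ => (p : ℝ) - 1 - κ) (-1) κ := by
    simpa using (hasDerivAt_id κ).const_sub ((p : ℝ) - 1)
  refine (((hasDerivAt_ff_add_one_add m j).comp_of_eq κ hinner hκ.symm).const_mul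
    (((p - (m + 1 + j))! : ℝ) * (m + 1 + j)!)).congr_deriv ?_
  ring

lemma Hpol_eq_descFactorial {p q a : ℕ} {κ : ℝ} (hκ : (p : ℝ) - 1 - κ = a) :
    Hpol p q κ = (p - q)! * q ! * a.descFactorial q := by
  rw [Hpol, hκ, ff_natCast]

theorem stmt4_general (k l1 l2 : ℕ)
    (hs1 : k + 2 ≤ l1 - l2) :
    deriv (Hpol (l2 + k + 1) (l1 - k - 1)) (k : ℝ) ≠ 0 ∧
    -(Hpol l1 l2 (k : ℝ)) / deriv (Hpol (l2 + k + 1) (l1 - k - 1)) (k : ℝ) =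
      (-1 : ℝ) ^ (k + l1 + l2) * ff ((l1 : ℝ) - (l2 : ℝ)) (k + 1) /
        (((2 * k + 2 - (l1 - l2)).factorial : ℝ) * ((l1 - l2 - k - 2).factorial : ℝ)) := by
  obtain ⟨e, rfl⟩ : ∃ e, l1 = l2 + k + 2 + e := ⟨l1 - l2 - k - 2, by omega⟩
  have hderiv := (hasDerivAt_Hpol_of_eq_natCast (p := l2 + k + 1) (m := l2) (j := e) (κ := k)
    (by push_cast; ring)).deriv
  have hvalue := Hpol_eq_descFactorial (p := l2 + k + 2 + e) (q := l2) (a := l2 + 1 + e) (κ := k)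
    (by push_cast; ring)
  have hff : ff ((↑(l2 + k + 2 + e) : ℝ) - l2) (k + 1) = (k + 2 + e).descFactorial (k + 1) := by
    rw [← ff_natCast]
    push_cast
    ring_nf
  have hsign : (-1 : ℝ) ^ (k + (l2 + k + 2 + e) + l2) = (-1) ^ e := by
    rw [show k + (l2 + k + 2 + e) + l2 = 2 * (k + l2 + 1) + e by omega, pow_add, pow_mul,
      neg_one_sq, one_pow, one_mul]
  have h1 := factorial_mul_descFactorial (show l2 ≤ l2 + 1 + e by omega)
  have h2 := factorial_mul_descFactorial (show k + 1 ≤ k + 2 + e by omega)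
  have hD : ((l2 + 1 + e).descFactorial l2 : ℝ) ≠ 0 := by
    exact_mod_cast descFactorial_eq_zero_iff_lt.not.mpr (by omega)
  rw [show l2 + 1 + e - l2 = e + 1 by omega] at h1
  rw [show k + 2 + e - (k + 1) = e + 1 by omega] at h2
  rw [show l2 + k + 2 + e - k - 1 = l2 + 1 + e by omega, hderiv, hvalue, hsign, hff,
    show 2 * k + 2 - (l2 + k + 2 + e - l2) = k - e by omega,
    show l2 + k + 2 + e - l2 - k - 2 = e by omega,
    show l2 + k + 1 - (l2 + 1 + e) = k - e by omega,
    show l2 + k + 2 + e - l2 = k + 2 + e by omega, ← h1, ← h2]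
  refine ⟨by simpa [factorial_ne_zero] using hD, ?_⟩
  field_simp
  rw [← pow_mul, mul_comm e, pow_mul, neg_one_sq, one_pow]
  push_cast
  ring

theorem stmt4 (k l1 l2 : ℕ) (h21 : l2 ≤ l1)
    (hs1 : k + 2 ≤ l1 - l2) (hs2 : l1 - l2 ≤ 2 * k + 2) :
    deriv (Hpol (l2 + k + 1) (l1 - k - 1)) (k : ℝ) ≠ 0 ∧
    -(Hpol l1 l2 (k : ℝ)) / deriv (Hpol (l2 + k + 1) (l1 - k - 1)) (k : ℝ) =
      (-1 : ℝ) ^ (k + l1 + l2) * ff ((l1 : ℝ) - (l2 : ℝ)) (k + 1) /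
        (((2 * k + 2 - (l1 - l2)).factorial : ℝ) * ((l1 - l2 - k - 2).factorial : ℝ)) :=
  stmt4_general k l1 l2 hs1
end

section
/- For a partition λ = (λ1, λ2) and the two-variable Knop–Sahi polynomial P^κ_λ, the evaluation P^κ_λ(λ1 - κ - 1, λ2) equals H_λ(κ) := (λ1-λ2)! λ2! (λ1-1-κ)^{\underline{λ2}}, as an identity of rational functions of κ. -/
/-!
Since `y = λ₂` is a natural number, `y^{\underline{λ₂ + j}}` vanishes for `j > 0`, so only the
`j = 0` terms of `P^κ_λ(x, λ₂)` survive; there the factor `(κ+1)^{\underline{λ₁-λ₂}}` cancels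
and, with `n = λ₁ - λ₂`, one is left with
`λ₂! · x^{\underline{λ₂}} · ∑ᵢ C(n,i) (x - λ₂)^{\underline{i}} (κ+1)^{\underline{n-i}}`.
At `x = λ₁ - κ - 1` the two arguments add up to `n`, so by Chu–Vandermonde the sum is
`n^{\underline{n}} = n!`.
-/

open Finset

/-- Falling factorial in the field `ℚ(κ)`. -/
noncomputable def ffF (a : RatFunc ℚ) (n : ℕ) : RatFunc ℚ :=
  ∏ i ∈ Finset.range n, (a - (i : RatFunc ℚ))

/-- The two-variable Knop–Sahi polynomial `P^κ_λ(x,y)`, evaluated in `ℚ(κ)`. -/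
noncomputable def KSfun (l1 l2 : ℕ) (κ x y : RatFunc ℚ) : RatFunc ℚ :=
  ∑ i ∈ Finset.range (l1 - l2 + 1), ∑ j ∈ Finset.range (l1 - l2 + 1 - i),
    ((l1 - l2).factorial : RatFunc ℚ) * ffF (κ + 1) (l1 - l2 - i) *
        ffF (κ + 1) (l1 - l2 - j) /
      ((i.factorial : RatFunc ℚ) * (j.factorial : RatFunc ℚ) *
        ((l1 - l2 - i - j).factorial : RatFunc ℚ) * ffF (κ + 1) (l1 - l2)) *
      ffF x (l2 + i) * ffF y (l2 + j)

lemma ffF_eq_smeval_descPochhammer (a : RatFunc ℚ) (n : ℕ) :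
    ffF a n = (descPochhammer ℤ n).smeval a := by
  induction n with
  | zero => simp [ffF]
  | succ n ih =>
    rw [ffF, prod_range_succ, ← ffF, ih, descPochhammer_succ_right, Polynomial.smeval_mul,
      Polynomial.smeval_sub, Polynomial.smeval_X, Polynomial.smeval_natCast]
    simp

lemma ffF_natCast (m n : ℕ) : ffF m n = m.descFactorial n := by
  rw [ffF_eq_smeval_descPochhammer, Polynomial.descPochhammer_smeval_eq_descFactorial]

lemma ffF_add (a : RatFunc ℚ) (m k : ℕ) : ffF a (m + k) = ffF a m * ffF (a - m) k := by
  rw [ffF, prod_range_add, ← ffF, ffF]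
  congr 1
  refine prod_congr rfl fun i _ => ?_
  push_cast
  ring

lemma ffF_X_add_one_ne_zero (n : ℕ) : ffF (RatFunc.X + 1) n ≠ 0 := by
  refine prod_ne_zero_iff.mpr fun i _ => ?_
  have hpoly : (Polynomial.X + 1 - (i : Polynomial ℚ)) ≠ 0 := fun h0 => by
    simpa [Polynomial.coeff_one] using congrArg (Polynomial.coeff · 1) h0
  simpa [RatFunc.algebraMap_X] using RatFunc.algebraMap_ne_zero hpoly

lemma ffF_add_eq_sum_choose (r s : RatFunc ℚ) (n : ℕ) :
    ffF (r + s) n = ∑ i ∈ range (n + 1), n.choose i * ffF r i * ffF s (n - i) := by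
  rw [ffF_eq_smeval_descPochhammer, Ring.descPochhammer_smeval_add n (Commute.all r s),
    Nat.sum_antidiagonal_eq_sum_range_succ_mk]
  simp [← ffF_eq_smeval_descPochhammer, mul_assoc]

lemma sum_choose_mul_ffF_sub_mul_ffF (a : RatFunc ℚ) (n : ℕ) :
    ∑ i ∈ range (n + 1), n.choose i * ffF (n - a) i * ffF a (n - i) = n.factorial := by
  rw [← ffF_add_eq_sum_choose, sub_add_cancel, ffF_natCast, Nat.descFactorial_self]

lemma KSfun_natCast_right (l2 n : ℕ) (κ x : RatFunc ℚ) (hκ : ffF (κ + 1) n ≠ 0) :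
    KSfun (l2 + n) l2 κ x l2 =
      l2.factorial * ∑ i ∈ range (n + 1), n.choose i * ffF (κ + 1) (n - i) * ffF x (l2 + i) := by
  rw [KSfun, add_tsub_cancel_left, mul_sum]
  refine sum_congr rfl fun i hi => ?_
  have hin : i ≤ n := Nat.lt_succ_iff.mp (mem_range.mp hi)
  have hy : ∀ j ≠ 0, ffF l2 (l2 + j) = 0 := fun j hj => by
    rw [ffF_natCast, Nat.descFactorial_eq_zero_iff_lt.mpr (by omega), Nat.cast_zero]
  rw [sum_eq_single_of_mem 0 (mem_range.mpr (by omega)) fun j _ hj => by rw [hy j hj, mul_zero],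
    add_zero, ffF_natCast, Nat.descFactorial_self, Nat.cast_choose _ hin]
  simp only [Nat.sub_zero, Nat.factorial_zero, Nat.cast_one, mul_one]
  field_simp

lemma KSfun_sub_sub_one_natCast_right (l2 n : ℕ) (κ : RatFunc ℚ) (hκ : ffF (κ + 1) n ≠ 0) :
    KSfun (l2 + n) l2 κ ((l2 + n : ℕ) - κ - 1) l2 =
      n.factorial * l2.factorial * ffF ((l2 + n : ℕ) - 1 - κ) l2 := by
  have hx : ∀ i, ffF ((l2 + n : ℕ) - κ - 1) (l2 + i) =
      ffF ((l2 + n : ℕ) - 1 - κ) l2 * ffF (n - (κ + 1)) i := fun i => by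
    rw [ffF_add]
    congr 2 <;> push_cast <;> ring
  calc KSfun (l2 + n) l2 κ ((l2 + n : ℕ) - κ - 1) l2
      = (l2.factorial : RatFunc ℚ) * ffF ((l2 + n : ℕ) - 1 - κ) l2 *
          ∑ i ∈ range (n + 1),
            (n.choose i : RatFunc ℚ) * ffF (n - (κ + 1)) i * ffF (κ + 1) (n - i) := by
        rw [KSfun_natCast_right _ _ _ _ hκ, mul_sum, mul_sum]
        refine sum_congr rfl fun i _ => ?_
        rw [hx]
        ring
    _ = _ := by
        rw [sum_choose_mul_ffF_sub_mul_ffF]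
        ring

theorem stmt14 (l1 l2 : ℕ) (h : l2 ≤ l1) :
    KSfun l1 l2 RatFunc.X ((l1 : RatFunc ℚ) - RatFunc.X - 1) (l2 : RatFunc ℚ) =
      ((l1 - l2).factorial : RatFunc ℚ) * (l2.factorial : RatFunc ℚ) *
        ffF ((l1 : RatFunc ℚ) - 1 - RatFunc.X) l2 := by
  obtain ⟨n, rfl⟩ := Nat.exists_eq_add_of_le h
  rw [add_tsub_cancel_left]
  exact KSfun_sub_sub_one_natCast_right l2 n RatFunc.X (ffF_X_add_one_ne_zero n)
end

section
/- Uniqueness in the Knop–Sahi characterization: if f ∈ Q(κ)[x,y] is a symmetric polynomial of degree ≤ |λ| satisfying f(μ1-κ-1, μ2) = 0 for all partitions μ with |μ| ≤ |λ| and μ ≠ λ, and f(λ1-κ-1, λ2) = H_λ(κ), then f = P^κ_λ. -/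
/-!
The difference `g = f - P^κ_λ` is symmetric, has degree at most `|λ|`, and vanishes at every
point `(μ₁ - κ - 1, μ₂)` with `μ` a partition, `|μ| ≤ |λ|`. For the values of `P^κ_λ` there,
factor out `x^{\underline{λ₂}} y^{\underline{λ₂}}` (which settles `μ₂ < λ₂`); two Chu–Vandermonde
summations then leave the factor `(μ₁ - λ₂ - s)^{\underline{λ₁ - λ₂ - s}}`, zero unless `μ₁ = λ₁`.

Such a `g` is zero. On the line `y = 0` it has the `|λ| + 1` roots `m - κ - 1`, so `y ∣ g`, and
`x y ∣ g` by symmetry. The quotient, translated by `(1, 1)`, satisfies the same hypotheses with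
`|λ| - 2` in place of `|λ|`, and induction concludes.
-/

open MvPolynomial

noncomputable def ffX (v : Fin 2) (n : ℕ) : MvPolynomial (Fin 2) (RatFunc ℚ) :=
  ∏ i ∈ Finset.range n, (X v - C (i : RatFunc ℚ))

/-- The two-variable Knop–Sahi polynomial `P^κ_λ` over `ℚ(κ)`, with `κ = RatFunc.X`. -/
noncomputable def KS (l1 l2 : ℕ) : MvPolynomial (Fin 2) (RatFunc ℚ) :=
  ∑ i ∈ Finset.range (l1 - l2 + 1), ∑ j ∈ Finset.range (l1 - l2 + 1 - i),
    C (((l1 - l2).factorial : RatFunc ℚ) * ffF (RatFunc.X + 1) (l1 - l2 - i) *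
          ffF (RatFunc.X + 1) (l1 - l2 - j) /
        ((i.factorial : RatFunc ℚ) * (j.factorial : RatFunc ℚ) *
          ((l1 - l2 - i - j).factorial : RatFunc ℚ) * ffF (RatFunc.X + 1) (l1 - l2))) *
      ffX 0 (l2 + i) * ffX 1 (l2 + j)

open Finset
open scoped Nat

theorem sum_range_eq_sum_range_of_eq_zero {M : Type*} [AddCommMonoid M] {f : ℕ → M} {m n : ℕ}
    (hm : ∀ j, m ≤ j → f j = 0) (hn : ∀ j, n ≤ j → f j = 0) :
    ∑ j ∈ range m, f j = ∑ j ∈ range n, f j := by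
  wlog hmn : m ≤ n generalizing m n
  · exact (this hn hm (by omega)).symm
  exact sum_subset (range_subset_range.2 hmn) fun j _ hj => hm j (by simpa using hj)

theorem Nat.choose_mul_descFactorial (n s k : ℕ) :
    n.choose (s + k) * (s + k).descFactorial s = n.descFactorial s * (n - s).choose k := by
  rw [Nat.descFactorial_eq_factorial_mul_choose, Nat.descFactorial_eq_factorial_mul_choose,
    mul_left_comm, Nat.choose_mul (Nat.le_add_right s k), Nat.add_sub_cancel_left, mul_assoc]

section FallingFactorial

variable {R : Type*} [CommRing R]

theorem descPochhammer_eval_eq_smeval (k : ℕ) (x : R) :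
    (descPochhammer R k).eval x = (descPochhammer ℤ k).smeval x := by
  rw [← descPochhammer_map (Int.castRingHom R), Polynomial.eval_map, ← Polynomial.aeval_eq_smeval,
    Polynomial.aeval_def, algebraMap_int_eq]

theorem descPochhammer_eval_add (k : ℕ) (x y : R) :
    (descPochhammer R k).eval (x + y) = ∑ j ∈ range (k + 1),
      (k.choose j : R) * ((descPochhammer R j).eval x * (descPochhammer R (k - j)).eval y) := by
  simp only [descPochhammer_eval_eq_smeval]
  rw [Ring.descPochhammer_smeval_add k (Commute.all x y),
    Nat.sum_antidiagonal_eq_sum_range_succ_mk]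

theorem descPochhammer_add_eval (m n : ℕ) (x : R) :
    (descPochhammer R (m + n)).eval x =
      (descPochhammer R m).eval x * (descPochhammer R n).eval (x - m) := by
  rw [← descPochhammer_mul, Polynomial.eval_mul, Polynomial.eval_comp, Polynomial.eval_sub,
    Polynomial.eval_X, Polynomial.eval_natCast]

theorem descPochhammer_eval_eq_neg_one_pow_mul (k : ℕ) (x : R) :
    (descPochhammer R k).eval x = (-1) ^ k * (descPochhammer R k).eval (k - 1 - x) := by
  rw [← ascPochhammer_eval_neg_eq_descPochhammer, descPochhammer_eval_eq_ascPochhammer]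
  ring_nf

theorem sum_choose_descFactorial_descPochhammer_mul {n s : ℕ} (hs : s ≤ n) (x y : R) :
    ∑ i ∈ range (n + 1), ((n.choose i * i.descFactorial s : ℕ) : R) *
        ((descPochhammer R i).eval x * (descPochhammer R (n - i)).eval y) =
      n.descFactorial s * (descPochhammer R s).eval x *
        (descPochhammer R (n - s)).eval (x - s + y) := by
  have hlow : ∑ i ∈ range s, ((n.choose i * i.descFactorial s : ℕ) : R) *
      ((descPochhammer R i).eval x * (descPochhammer R (n - i)).eval y) = 0 :=
    sum_eq_zero fun i hi => by
      rw [Nat.descFactorial_eq_zero_iff_lt.2 (mem_range.1 hi), mul_zero, Nat.cast_zero, zero_mul]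
  rw [show n + 1 = s + (n - s + 1) by omega, sum_range_add, hlow, zero_add,
    descPochhammer_eval_add, mul_sum]
  refine sum_congr rfl fun k _ => ?_
  rw [Nat.choose_mul_descFactorial, descPochhammer_add_eval, show n - (s + k) = n - s - k by omega]
  push_cast
  ring

theorem sum_choose_descFactorial_descPochhammer_sub {n b : ℕ} (hb : b ≤ n) (m : ℕ)
    (y : R) :
    ∑ j ∈ range (m + 1), ((m.choose j * b.descFactorial j : ℕ) : R) *
        (descPochhammer R (n - j)).eval y =
      (descPochhammer R (n - b)).eval y * (descPochhammer R b).eval (m + (y - (n - b : ℕ))) := by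
  have hswap : ∀ j, m.choose j * b.descFactorial j = b.choose j * m.descFactorial j := fun j => by
    rw [Nat.descFactorial_eq_factorial_mul_choose, Nat.descFactorial_eq_factorial_mul_choose]
    ring
  simp only [hswap]
  rw [sum_range_eq_sum_range_of_eq_zero (n := b + 1)
      (fun j hj => by rw [Nat.descFactorial_of_lt (by omega)]; simp)
      (fun j hj => by rw [Nat.choose_eq_zero_of_lt (by omega)]; simp),
    descPochhammer_eval_add, mul_sum]
  refine sum_congr rfl fun j hj => ?_
  have hjb : j ≤ b := Nat.lt_succ_iff.1 (mem_range.1 hj)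
  rw [show n - j = (n - b) + (b - j) by omega, descPochhammer_add_eval,
    descPochhammer_eval_eq_descFactorial]
  push_cast
  ring

theorem sum_choose_descFactorial_descPochhammer_sub_eq_neg_one_pow {n b i : ℕ} (hb : b ≤ n)
    (hi : i ≤ n) (A : R) :
    ∑ j ∈ range (n + 1 - i), (((n - i).choose j * b.descFactorial j : ℕ) : R) *
        (descPochhammer R (n - j)).eval A =
      (-1) ^ b * (descPochhammer R (n - b)).eval A * ∑ s ∈ range (b + 1),
        (b.choose s : R) * ((i.descFactorial s : R) * (descPochhammer R (b - s)).eval (-A - 1)) := by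
  rw [Nat.sub_add_comm hi, sum_choose_descFactorial_descPochhammer_sub hb,
    descPochhammer_eval_eq_neg_one_pow_mul b, Nat.cast_sub hi, Nat.cast_sub hb,
    show (b : R) - 1 - (n - i + (A - (n - b))) = i + (-A - 1) by ring, descPochhammer_eval_add]
  simp only [descPochhammer_eval_eq_descFactorial]
  ring

theorem sum_sum_choose_descPochhammer_eq_ite {n a b : ℕ} (hba : b ≤ a) (hab : a + b ≤ n)
    (A : R) :
    ∑ i ∈ range (n + 1), ∑ j ∈ range (n + 1 - i),
      ((n.choose i * (n - i).choose j : ℕ) : R) * (descPochhammer R (n - i)).eval A *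
        (descPochhammer R (n - j)).eval A * (descPochhammer R i).eval (a - A) *
          b.descFactorial j =
      if a = n ∧ b = 0 then n ! * (descPochhammer R n).eval A else 0 := by
  set c : ℕ → R := fun s => (-1) ^ b * (descPochhammer R (n - b)).eval A * b.choose s *
    (descPochhammer R (b - s)).eval (-A - 1) with hc
  calc _ = ∑ i ∈ range (n + 1), ∑ s ∈ range (b + 1), c s *
        (((n.choose i * i.descFactorial s : ℕ) : R) *
          ((descPochhammer R i).eval (a - A) * (descPochhammer R (n - i)).eval A)) := by
        refine sum_congr rfl fun i hi => ?_
        have hi : i ≤ n := Nat.lt_succ_iff.1 (mem_range.1 hi)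
        calc _ = (n.choose i : R) * (descPochhammer R (n - i)).eval A *
              (descPochhammer R i).eval (a - A) * ∑ j ∈ range (n + 1 - i),
                (((n - i).choose j * b.descFactorial j : ℕ) : R) *
                  (descPochhammer R (n - j)).eval A := by
              rw [mul_sum]
              exact sum_congr rfl fun j _ => by push_cast; ring
          _ = _ := by
              rw [sum_choose_descFactorial_descPochhammer_sub_eq_neg_one_pow (by omega) hi]
              simp only [mul_sum]
              exact sum_congr rfl fun s _ => by push_cast; ring
    _ = ∑ s ∈ range (b + 1), c s * (n.descFactorial s * (descPochhammer R s).eval (a - A) *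
          ((a - s).descFactorial (n - s) : ℕ)) := by
        rw [sum_comm]
        refine sum_congr rfl fun s hs => ?_
        have hs : s ≤ b := Nat.lt_succ_iff.1 (mem_range.1 hs)
        rw [← mul_sum, sum_choose_descFactorial_descPochhammer_mul (by omega),
          ← descPochhammer_eval_eq_descFactorial R (a - s), Nat.cast_sub (by omega : s ≤ a),
          show (a : R) - A - s + A = a - s by ring]
    _ = _ := by
        rcases (show a = n ∨ a < n by omega) with rfl | han
        · obtain rfl : b = 0 := by omega
          simp [hc, Nat.descFactorial_self, mul_comm]
        · rw [if_neg (by omega)]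
          refine sum_eq_zero fun s hs => ?_
          have hs : s ≤ b := Nat.lt_succ_iff.1 (mem_range.1 hs)
          rw [Nat.descFactorial_of_lt (show a - s < n - s by omega)]
          simp

end FallingFactorial

theorem totalDegree_X_add_C_le {R σ : Type*} [CommSemiring R] (i : σ) (c : R) :
    (X i + C c : MvPolynomial σ R).totalDegree ≤ 1 :=
  (totalDegree_add _ _).trans (max_le
    (by simpa [X] using totalDegree_monomial_le (Finsupp.single i 1) (1 : R))
    ((totalDegree_C c).trans_le zero_le_one))

section Shift

variable {R : Type*} [CommRing R] {σ τ : Type*}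

noncomputable def shiftOne : MvPolynomial σ R →ₐ[R] MvPolynomial σ R :=
  bind₁ fun i => X i + 1

theorem eval_shiftOne (x : σ → R) (p : MvPolynomial σ R) :
    eval x (shiftOne p) = eval (x + 1) p := by
  have hx : (fun i => eval x (X i + 1 : MvPolynomial σ R)) = x + 1 := by
    ext i
    simp
  change eval₂Hom (RingHom.id R) x (bind₁ _ p) = _
  rw [eval₂Hom_bind₁]
  exact congrArg (eval · p) hx

theorem rename_shiftOne (e : σ → τ) (p : MvPolynomial σ R) :
    rename e (shiftOne p) = shiftOne (rename e p) := by
  simp only [shiftOne, rename_bind₁, bind₁_rename, Function.comp_def, map_add, rename_X, map_one]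

theorem shiftOne_injective : Function.Injective (shiftOne : MvPolynomial σ R → _) := by
  refine Function.LeftInverse.injective (g := bind₁ fun i => X i - 1) fun p => ?_
  have hX : (fun i => bind₁ (fun i => X i - 1) (X i + 1 : MvPolynomial σ R)) = X := by
    ext i : 1
    simp
  rw [shiftOne, bind₁_bind₁, hX, bind₁_X_left, AlgHom.id_apply]

theorem totalDegree_shiftOne_le (p : MvPolynomial σ R) :
    (shiftOne p).totalDegree ≤ p.totalDegree := by
  conv_lhs => rw [p.as_sum]
  rw [map_sum]
  refine (totalDegree_finsetSum _ _).trans (Finset.sup_le fun d hd => ?_)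
  rw [shiftOne, bind₁_monomial]
  refine (totalDegree_mul _ _).trans ?_
  rw [totalDegree_C, zero_add]
  refine (totalDegree_finsetProd _ _).trans ((Finset.sum_le_sum fun i _ => ?_).trans
    (le_totalDegree hd))
  refine (totalDegree_pow _ _).trans (mul_le_of_le_one_right (Nat.zero_le _) ?_)
  rw [← C_1]
  exact totalDegree_X_add_C_le i 1

end Shift

section Vanishing

variable {R : Type*} [CommRing R] [IsDomain R]

theorem X_zero_dvd_of_eval_cons_zero_eq_zero {n : ℕ} (g : MvPolynomial (Fin (n + 1)) R)
    (S : Fin n → Finset R) (hS : ∀ j, g.degreeOf j.succ < #(S j))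
    (h : ∀ x : Fin n → R, (∀ j, x j ∈ S j) → eval (Fin.cons 0 x) g = 0) : X 0 ∣ g := by
  rw [← map_dvd_iff (finSuccEquiv R n), finSuccEquiv_X_zero, Polynomial.X_dvd_iff]
  refine eq_zero_of_eval_zero_at_prod_finset _ S
    (fun j => (degreeOf_coeff_finSuccEquiv g j 0).trans_lt (hS j)) fun x hx => ?_
  rw [Polynomial.coeff_zero_eq_eval_zero, eval_polynomial_eval_finSuccEquiv, map_zero]
  exact h x hx

theorem X_zero_mul_X_one_dvd_of_rename_swap_eq {g : MvPolynomial (Fin 2) R}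
    (hsym : rename (Equiv.swap 0 1) g = g) (hdvd : X 0 ∣ g) : X 0 * X 1 ∣ g := by
  obtain ⟨h, hh⟩ := hdvd
  have hX1 : X 1 ∣ g := by
    have := map_dvd (rename (Equiv.swap (0 : Fin 2) 1)) (show X 0 ∣ g from ⟨h, hh⟩)
    rwa [hsym, rename_X, Equiv.swap_apply_left] at this
  rw [hh] at hX1 ⊢
  exact mul_dvd_mul_left _ ((X_dvd_mul_iff.1 hX1).resolve_left (by simp))

theorem X_zero_dvd_of_rename_swap_eq [CharZero R] {d : R} {N : ℕ} {g : MvPolynomial (Fin 2) R}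
    (hsym : rename (Equiv.swap 0 1) g = g) (hdeg : g.totalDegree ≤ N)
    (hvan : ∀ m ≤ N, eval ![(m : R) - d, 0] g = 0) : X 0 ∣ g := by
  classical
  refine X_zero_dvd_of_eval_cons_zero_eq_zero g
    (fun _ => (range (N + 1)).image fun m : ℕ => (m : R) - d) (fun _ => ?_) fun x hx => ?_
  · rw [card_image_of_injective _ fun a b h => by simpa using h, card_range]
    exact Nat.lt_succ_of_le ((degreeOf_le_totalDegree g _).trans hdeg)
  · obtain ⟨m, hm, hxm⟩ := mem_image.1 (hx 0)
    have hpt : (Fin.cons 0 x : Fin 2 → R) ∘ Equiv.swap 0 1 = ![(m : R) - d, 0] := by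
      ext i
      fin_cases i <;> simp [hxm]
    rw [← hsym, eval_rename, hpt]
    exact hvan m (by simpa [Nat.lt_succ_iff] using hm)

theorem eq_zero_of_rename_swap_eq_of_eval_eq_zero [CharZero R] (d : R)
    (hd : ∀ m : ℕ, (m + 1 : R) ≠ d) (N : ℕ) (g : MvPolynomial (Fin 2) R)
    (hsym : rename (Equiv.swap 0 1) g = g) (hdeg : g.totalDegree ≤ N)
    (hvan : ∀ m1 m2 : ℕ, m2 ≤ m1 → m1 + m2 ≤ N → eval ![(m1 : R) - d, m2] g = 0) :
    g = 0 := by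
  induction N using Nat.strong_induction_on generalizing g with
  | _ N ih =>
  obtain ⟨s, rfl⟩ := X_zero_mul_X_one_dvd_of_rename_swap_eq hsym <|
    X_zero_dvd_of_rename_swap_eq hsym hdeg fun m hm => by simpa using hvan m 0 m.zero_le (by omega)
  suffices s = 0 by rw [this, mul_zero]
  by_contra hs
  have hXX : (X 0 * X 1 : MvPolynomial (Fin 2) R) ≠ 0 := mul_ne_zero (X_ne_zero _) (X_ne_zero _)
  have hsdeg : s.totalDegree + 2 ≤ N := by
    rw [totalDegree_mul_of_isDomain hXX hs,
      totalDegree_mul_of_isDomain (X_ne_zero _) (X_ne_zero _), totalDegree_X, totalDegree_X]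
      at hdeg
    omega
  have hssym : rename (Equiv.swap 0 1) s = s := by
    refine mul_left_cancel₀ hXX ?_
    rw [← hsym, map_mul, map_mul, rename_X, rename_X, Equiv.swap_apply_left,
      Equiv.swap_apply_right, mul_comm (X 1)]
  have hsvan : ∀ m1 m2 : ℕ, m2 ≤ m1 → m1 + m2 ≤ N - 2 →
      eval ![(m1 : R) - d, m2] (shiftOne s) = 0 := by
    intro m1 m2 h21 hsum
    have hpt : ![(m1 : R) - d, m2] + 1 = ![((m1 + 1 : ℕ) : R) - d, ((m2 + 1 : ℕ) : R)] := by
      ext i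
      fin_cases i <;> simp [sub_add_eq_add_sub]
    have hg := hvan (m1 + 1) (m2 + 1) (by omega) (by omega)
    rw [map_mul, map_mul, eval_X, eval_X] at hg
    rw [eval_shiftOne, hpt]
    simpa [hd m1, sub_eq_zero, Nat.cast_add_one_ne_zero] using hg
  refine hs (shiftOne_injective ?_)
  rw [map_zero]
  exact ih (N - 2) (by omega) (shiftOne s) (by rw [rename_shiftOne, hssym])
    ((totalDegree_shiftOne_le s).trans (by omega)) hsvan

end Vanishing

theorem RatFunc.X_ne_intCast (k : ℤ) : (RatFunc.X : RatFunc ℚ) ≠ k := by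
  rw [← RatFunc.algebraMap_X, ← map_intCast (algebraMap (Polynomial ℚ) (RatFunc ℚ)),
    (RatFunc.algebraMap_injective ℚ).ne_iff, ← Polynomial.C_eq_intCast]
  exact Polynomial.X_ne_C _

theorem ffF_eq_eval (a : RatFunc ℚ) (n : ℕ) : ffF a n = (descPochhammer (RatFunc ℚ) n).eval a :=
  (descPochhammer_eval_eq_prod_range n a).symm

theorem descPochhammer_eval_X_add_one_ne_zero (n : ℕ) :
    (descPochhammer (RatFunc ℚ) n).eval (RatFunc.X + 1) ≠ 0 := by
  rw [descPochhammer_eval_eq_prod_range, prod_ne_zero_iff]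
  intro i _
  rw [show RatFunc.X + 1 - (i : RatFunc ℚ) = RatFunc.X - ((i - 1 : ℤ) : RatFunc ℚ) by
    push_cast; ring, sub_ne_zero]
  exact RatFunc.X_ne_intCast _

theorem eval_ffX (x : Fin 2 → RatFunc ℚ) (v : Fin 2) (n : ℕ) : eval x (ffX v n) = ffF (x v) n := by
  simp [ffX, ffF]

theorem rename_ffX (e : Fin 2 → Fin 2) (v : Fin 2) (n : ℕ) : rename e (ffX v n) = ffX (e v) n := by
  simp [ffX]

theorem totalDegree_ffX_le (v : Fin 2) (n : ℕ) : (ffX v n).totalDegree ≤ n := by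
  unfold ffX
  refine (totalDegree_finsetProd _ _).trans
    (((sum_le_sum fun i _ => ?_).trans_eq (card_eq_sum_ones (range n)).symm).trans_eq (card_range n))
  rw [sub_eq_add_neg, ← map_neg]
  exact totalDegree_X_add_C_le v _

noncomputable def ksCoeff (n i j : ℕ) : RatFunc ℚ :=
  (n ! : RatFunc ℚ) * ffF (RatFunc.X + 1) (n - i) * ffF (RatFunc.X + 1) (n - j) /
    ((i ! : RatFunc ℚ) * (j ! : RatFunc ℚ) * ((n - i - j)! : RatFunc ℚ) * ffF (RatFunc.X + 1) n)

theorem KS_eq_sum (l1 l2 : ℕ) :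
    KS l1 l2 = ∑ i ∈ range (l1 - l2 + 1), ∑ j ∈ range (l1 - l2 + 1 - i),
      C (ksCoeff (l1 - l2) i j) * ffX 0 (l2 + i) * ffX 1 (l2 + j) :=
  rfl

theorem ksCoeff_comm (n i j : ℕ) : ksCoeff n i j = ksCoeff n j i := by
  simp only [ksCoeff, Nat.sub_right_comm n i j]
  ring

theorem ksCoeff_eq {n i j : ℕ} (hij : i + j ≤ n) :
    ksCoeff n i j = ((n.choose i * (n - i).choose j : ℕ) : RatFunc ℚ) *
      (descPochhammer (RatFunc ℚ) (n - i)).eval (RatFunc.X + 1) *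
      (descPochhammer (RatFunc ℚ) (n - j)).eval (RatFunc.X + 1) /
      (descPochhammer (RatFunc ℚ) n).eval (RatFunc.X + 1) := by
  have hfact : n ! = n.choose i * (n - i).choose j * (i ! * j ! * (n - i - j)!) := by
    rw [← Nat.choose_mul_factorial_mul_factorial (by omega : i ≤ n),
      ← Nat.choose_mul_factorial_mul_factorial (by omega : j ≤ n - i)]
    ring
  rw [ksCoeff, hfact]
  simp only [ffF_eq_eval]
  have hP := descPochhammer_eval_X_add_one_ne_zero n
  have hF : ∀ k : ℕ, (k ! : RatFunc ℚ) ≠ 0 := fun k => Nat.cast_ne_zero.2 k.factorial_ne_zero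
  push_cast
  field_simp [hF]

theorem rename_swap_KS (l1 l2 : ℕ) : rename (Equiv.swap 0 1) (KS l1 l2) = KS l1 l2 := by
  simp only [KS_eq_sum, map_sum, map_mul, rename_C, rename_ffX, Equiv.swap_apply_left,
    Equiv.swap_apply_right]
  rw [sum_comm' (t' := range (l1 - l2 + 1)) (s' := fun j => range (l1 - l2 + 1 - j))
    (fun i j => by simp only [mem_range]; omega)]
  refine sum_congr rfl fun i _ => sum_congr rfl fun j _ => ?_
  rw [ksCoeff_comm, mul_right_comm]

theorem totalDegree_KS_le {l1 l2 : ℕ} (hl : l2 ≤ l1) : (KS l1 l2).totalDegree ≤ l1 + l2 := by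
  rw [KS_eq_sum]
  refine (totalDegree_finsetSum _ _).trans (Finset.sup_le fun i hi => ?_)
  refine (totalDegree_finsetSum _ _).trans (Finset.sup_le fun j hj => ?_)
  simp only [mem_range] at hi hj
  refine (totalDegree_mul _ _).trans ?_
  refine (add_le_add ((totalDegree_mul _ _).trans (add_le_add (totalDegree_C _).le
    (totalDegree_ffX_le _ _))) (totalDegree_ffX_le _ _)).trans ?_
  omega

theorem sum_sum_ksCoeff_mul_eq_ite {n a b : ℕ} (hba : b ≤ a) (hab : a + b ≤ n) :
    ∑ i ∈ range (n + 1), ∑ j ∈ range (n + 1 - i), ksCoeff n i j *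
        (descPochhammer (RatFunc ℚ) i).eval ((a : RatFunc ℚ) - (RatFunc.X + 1)) *
          b.descFactorial j =
      if a = n ∧ b = 0 then (n ! : RatFunc ℚ) else 0 := by
  have hP := descPochhammer_eval_X_add_one_ne_zero n
  calc _ = (∑ i ∈ range (n + 1), ∑ j ∈ range (n + 1 - i),
        ((n.choose i * (n - i).choose j : ℕ) : RatFunc ℚ) *
          (descPochhammer (RatFunc ℚ) (n - i)).eval (RatFunc.X + 1) *
          (descPochhammer (RatFunc ℚ) (n - j)).eval (RatFunc.X + 1) *
          (descPochhammer (RatFunc ℚ) i).eval ((a : RatFunc ℚ) - (RatFunc.X + 1)) *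
          b.descFactorial j) / (descPochhammer (RatFunc ℚ) n).eval (RatFunc.X + 1) := by
        rw [sum_div]
        refine sum_congr rfl fun i hi => ?_
        rw [sum_div]
        refine sum_congr rfl fun j hj => ?_
        simp only [mem_range] at hi hj
        rw [ksCoeff_eq (by omega)]
        ring
    _ = _ := by
        rw [sum_sum_choose_descPochhammer_eq_ite hba hab]
        split_ifs
        · field_simp
        · rw [zero_div]

theorem eval_KS {l1 l2 m1 m2 : ℕ} (h21 : m2 ≤ m1) (hm : m1 + m2 ≤ l1 + l2) :
    eval ![(m1 : RatFunc ℚ) - (RatFunc.X + 1), (m2 : RatFunc ℚ)] (KS l1 l2) =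
      if m1 = l1 ∧ m2 = l2 then
        (((l1 - l2)! * l2 ! : ℕ) : RatFunc ℚ) * ffF ((l1 : RatFunc ℚ) - (RatFunc.X + 1)) l2
      else 0 := by
  simp only [KS_eq_sum, map_sum, map_mul, eval_C, eval_ffX, Matrix.cons_val_zero,
    Matrix.cons_val_one, ffF_eq_eval]
  rcases lt_or_ge m2 l2 with hlt | hge
  · rw [if_neg (by omega)]
    refine sum_eq_zero fun i _ => sum_eq_zero fun j _ => ?_
    rw [descPochhammer_eval_eq_descFactorial, Nat.descFactorial_of_lt (by omega)]
    simp
  obtain ⟨a, rfl⟩ := Nat.exists_eq_add_of_le (h21.trans' hge)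
  obtain ⟨b, rfl⟩ := Nat.exists_eq_add_of_le hge
  set A : RatFunc ℚ := RatFunc.X + 1
  calc _ = (descPochhammer (RatFunc ℚ) l2).eval (((l2 + a : ℕ) : RatFunc ℚ) - A) *
        (l2 + b).descFactorial l2 * ∑ i ∈ range (l1 - l2 + 1), ∑ j ∈ range (l1 - l2 + 1 - i),
          ksCoeff (l1 - l2) i j * (descPochhammer (RatFunc ℚ) i).eval (a - A) *
            b.descFactorial j := by
        simp only [mul_sum]
        refine sum_congr rfl fun i _ => sum_congr rfl fun j _ => ?_
        rw [descPochhammer_add_eval, descPochhammer_add_eval, descPochhammer_eval_eq_descFactorial,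
          show ((l2 + a : ℕ) : RatFunc ℚ) - A - l2 = a - A by push_cast; ring, Nat.cast_add l2 b,
          add_sub_cancel_left, descPochhammer_eval_eq_descFactorial]
        ring
    _ = _ := by
        rw [sum_sum_ksCoeff_mul_eq_ite (by omega) (by omega)]
        by_cases h : a = l1 - l2 ∧ b = 0
        · obtain ⟨ha, rfl⟩ := h
          have hl : l2 + a = l1 := by omega
          rw [if_pos ⟨ha, rfl⟩, if_pos ⟨hl, rfl⟩, hl, add_zero, Nat.descFactorial_self]
          push_cast
          ring
        · rw [if_neg h, if_neg (by omega), mul_zero]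

theorem stmt16 (l1 l2 : ℕ) (hl : l2 ≤ l1)
    (f : MvPolynomial (Fin 2) (RatFunc ℚ))
    (hsym : MvPolynomial.rename (Equiv.swap (0 : Fin 2) 1) f = f)
    (hdeg : f.totalDegree ≤ l1 + l2)
    (hvan : ∀ m1 m2 : ℕ, m2 ≤ m1 → m1 + m2 ≤ l1 + l2 → (m1, m2) ≠ (l1, l2) →
      MvPolynomial.eval
        (fun v : Fin 2 => if v = 0 then (m1 : RatFunc ℚ) - RatFunc.X - 1
          else (m2 : RatFunc ℚ)) f = 0)
    (hval : MvPolynomial.eval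
        (fun v : Fin 2 => if v = 0 then (l1 : RatFunc ℚ) - RatFunc.X - 1
          else (l2 : RatFunc ℚ)) f =
      ((l1 - l2).factorial : RatFunc ℚ) * (l2.factorial : RatFunc ℚ) *
        ffF ((l1 : RatFunc ℚ) - 1 - RatFunc.X) l2) :
    f = KS l1 l2 := by
  have hpt : ∀ m1 m2 : ℕ, (fun v : Fin 2 => if v = 0 then (m1 : RatFunc ℚ) - RatFunc.X - 1
      else (m2 : RatFunc ℚ)) = ![(m1 : RatFunc ℚ) - (RatFunc.X + 1), (m2 : RatFunc ℚ)] := by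
    intro m1 m2
    ext v
    fin_cases v <;> simp [sub_sub]
  simp only [hpt] at hvan hval
  rw [← sub_eq_zero]
  refine eq_zero_of_rename_swap_eq_of_eval_eq_zero (RatFunc.X + 1)
    (fun m h => RatFunc.X_ne_intCast m (by exact_mod_cast (add_left_injective 1 h).symm))
    (l1 + l2) _ (by rw [map_sub, hsym, rename_swap_KS])
    ((totalDegree_sub _ _).trans (max_le hdeg (totalDegree_KS_le hl))) fun m1 m2 h21 hm => ?_
  rw [map_sub, eval_KS h21 hm, sub_eq_zero]
  split_ifs with h
  · obtain ⟨rfl, rfl⟩ := h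
    rw [hval, sub_sub, add_comm (1 : RatFunc ℚ)]
    push_cast
    ring
  · exact hvan m1 m2 h21 hm (by simpa using h)
end

section
/- Distinctness of Casimir eigenvalues: fix integers d ≥ 0 and k ≥ 0. For partitions λ, μ of the same size d (λ1+λ2 = μ1+μ2 = d), one has c_λ = c_μ with λ ≠ μ if and only if {λ, μ} is a pair of the form {ν, ν†} where ν is k-quasiregular with ν ≠ ν†, where c_λ := (λ2-λ1)(2k+2+λ2-λ1) and ν† := (ν2+k+1, ν1-k-1). -/
def IsPartition (p : ℤ × ℤ) : Prop := 0 ≤ p.2 ∧ p.2 ≤ p.1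

def KQuasiregular (k : ℤ) (p : ℤ × ℤ) : Prop :=
  IsPartition p ∧ k + 1 ≤ p.1 ∧ p.1 - p.2 ≤ k

def casimirEig (k : ℤ) (p : ℤ × ℤ) : ℤ := (p.2 - p.1) * (2 * k + 2 + p.2 - p.1)

def dag (k : ℤ) (p : ℤ × ℤ) : ℤ × ℤ := (p.2 + k + 1, p.1 - k - 1)

/-! A pair `p` is determined by its size `p.1 + p.2` and its gap `p.1 - p.2`. The eigenvalue
`casimirEig k p = g (g - (2k+2))` depends only on the gap `g`, and `dag k` preserves the size
while sending `g` to `2k+2 - g`; so two pairs of equal size share an eigenvalue exactly when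
they are equal or swapped by `dag k`. Of two distinct partitions swapped by `dag k`, the one
with the smaller gap is `k`-quasiregular. -/

section

variable {k : ℤ} {p q : ℤ × ℤ}

lemma dag_dag : dag k (dag k p) = p := by
  ext <;> simp only [dag] <;> ring

lemma casimirEig_dag : casimirEig k (dag k p) = casimirEig k p := by
  simp only [casimirEig, dag]
  ring

lemma casimirEig_eq_iff (hsize : p.1 + p.2 = q.1 + q.2) :
    casimirEig k p = casimirEig k q ↔ q = p ∨ q = dag k p := by
  constructor
  · intro h
    have hfactor : ((p.1 - p.2) - (q.1 - q.2)) * ((p.1 - p.2) + (q.1 - q.2) - (2 * k + 2)) = 0 := by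
      simp only [casimirEig] at h
      linear_combination h
    rcases mul_eq_zero.mp hfactor with hgap | hgap
    · exact Or.inl (Prod.ext (by omega) (by omega))
    · exact Or.inr (Prod.ext (by simp only [dag]; omega) (by simp only [dag]; omega))
  · rintro (rfl | rfl)
    · rfl
    · exact casimirEig_dag.symm

lemma kQuasiregular_or_kQuasiregular_dag (hp : IsPartition p) (hdag : IsPartition (dag k p))
    (hne : p ≠ dag k p) : KQuasiregular k p ∨ KQuasiregular k (dag k p) := by
  simp only [KQuasiregular, IsPartition, dag] at *
  by_cases hgap : p.1 - p.2 ≤ k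
  · left
    omega
  · have hgap' : p.1 - p.2 ≠ k + 1 := fun h => hne (Prod.ext (by omega) (by omega))
    right
    omega

end

theorem stmt18_general (k : ℤ) (d : ℤ) (l m : ℤ × ℤ)
    (hl : IsPartition l) (hm : IsPartition m)
    (hld : l.1 + l.2 = d) (hmd : m.1 + m.2 = d) :
    (casimirEig k l = casimirEig k m ∧ l ≠ m) ↔
      ∃ ν : ℤ × ℤ, IsPartition ν ∧ KQuasiregular k ν ∧ ν ≠ dag k ν ∧
        ({l, m} : Set (ℤ × ℤ)) = {ν, dag k ν} := by
  constructor
  · rintro ⟨hc, hne⟩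
    obtain rfl : m = dag k l :=
      ((casimirEig_eq_iff (hld.trans hmd.symm)).1 hc).resolve_left hne.symm
    rcases kQuasiregular_or_kQuasiregular_dag hl hm hne with hq | hq
    · exact ⟨l, hl, hq, hne, rfl⟩
    · refine ⟨dag k l, hm, hq, by rwa [dag_dag, ne_comm], by rw [dag_dag, Set.pair_comm]⟩
  · rintro ⟨ν, -, -, hne, hset⟩
    rcases Set.pair_eq_pair_iff.mp hset with ⟨rfl, rfl⟩ | ⟨rfl, rfl⟩
    · exact ⟨casimirEig_dag.symm, hne⟩
    · exact ⟨casimirEig_dag, hne.symm⟩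

theorem stmt18 (k : ℤ) (hk : 0 ≤ k) (d : ℤ) (hd : 0 ≤ d) (l m : ℤ × ℤ)
    (hl : IsPartition l) (hm : IsPartition m)
    (hld : l.1 + l.2 = d) (hmd : m.1 + m.2 = d) :
    (casimirEig k l = casimirEig k m ∧ l ≠ m) ↔
      ∃ ν : ℤ × ℤ, IsPartition ν ∧ KQuasiregular k ν ∧ ν ≠ dag k ν ∧
        ({l, m} : Set (ℤ × ℤ)) = {ν, dag k ν} :=
  stmt18_general k d l m hl hm hld hmd
end
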